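/- The map R_{α,β}(x,y) = (y + (α−β)/(x−y), x + (α−β)/(x−y)) (the F_V map) satisfies the parametric Yang–Baxter equation R²³_{β,γ} ∘ R¹³_{α,γ} ∘ R¹²_{α,β} = R¹²_{α,β} ∘ R¹³_{α,γ} ∘ R²³_{β,γ}, wherever defined. -/

import Mathlib

/-!
Each `R_{a,b}` swaps its two arguments and then translates both by the same shift
`(a - b)/(x - y)`. Composing three such maps, the two sides of the Yang–Baxter equation are
`(z + t₂, y + t₁ + t₂ + t₃, x + t₁ + t₃)` and `(z + s₁ + s₃, y + s₁ + s₂ + s₃, x + s₂)`, so it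
suffices that `t₂ = s₁ + s₃` and `t₁ + t₃ = s₂`. With `p = x - y`, `q = y - z`, all six shifts are
quotients of the parameters by `p`, `q`, `D = pq + (α - β)` and `E = pq - (β - γ)`, and after
clearing denominators both relations become the single identity
`(α - γ) p q = (β - γ) D + (α - β) E`.
-/

noncomputable section

/-- First component of the map. -/
def uYB (α β x y : ℂ) : ℂ := y + (α-β)/(x-y)

/-- Second component of the map. -/
def vYB (α β x y : ℂ) : ℂ := x + (α-β)/(x-y)

/-- The denominator appearing in the map. -/
def dYB (α β x y : ℂ) : ℂ := x-y

theorem uYB_sub (a b x y w : ℂ) (h : x - y ≠ 0) :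
    uYB a b x y - w = ((x - y) * (y - w) + (a - b)) / (x - y) := by
  unfold uYB
  field_simp
  ring

theorem sub_vYB (a b x y w : ℂ) (h : x - y ≠ 0) :
    w - vYB a b x y = ((w - x) * (x - y) - (a - b)) / (x - y) := by
  unfold vYB
  field_simp
  ring

theorem shift_relations_of_identity {α β γ p q D E : ℂ} (hp : p ≠ 0) (hq : q ≠ 0)
    (hD : D ≠ 0) (hE : E ≠ 0) (hDE : (α - γ) * p * q = (β - γ) * D + (α - β) * E) :
    (α - γ) / (D / p) = (β - γ) / q + (α - β) / (q * D / E) ∧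
      (α - β) / p + (β - γ) / (p * E / D) = (α - γ) / (E / q) := by
  constructor
  · field_simp
    linear_combination hDE
  · field_simp
    linear_combination -hDE

theorem FV_YangBaxter_general (α β γ x y z : ℂ)
    (x₁ y₁ x₂ z₁ y₂ z₂ ty tz tx tzz txx tyy : ℂ)
    -- left-hand side  R²³_(β,γ) ∘ R¹³_(α,γ) ∘ R¹²_(α,β) (x,y,z):
    (hx₁ : x₁ = uYB α β x y) (hy₁ : y₁ = vYB α β x y)
    (hx₂ : x₂ = uYB α γ x₁ z) (hz₁ : z₁ = vYB α γ x₁ z)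
    (hy₂ : y₂ = uYB β γ y₁ z₁) (hz₂ : z₂ = vYB β γ y₁ z₁)
    -- right-hand side  R¹²_(α,β) ∘ R¹³_(α,γ) ∘ R²³_(β,γ) (x,y,z):
    (hty : ty = uYB β γ y z) (htz : tz = vYB β γ y z)
    (htx : tx = uYB α γ x tz) (htzz : tzz = vYB α γ x tz)
    (htxx : txx = uYB α β tx ty) (htyy : tyy = vYB α β tx ty)
    -- all denominators nonzero:
    (h1 : dYB α β x y ≠ 0) (h2 : dYB α γ x₁ z ≠ 0)
    (h4 : dYB β γ y z ≠ 0) (h5 : dYB α γ x tz ≠ 0) :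
    x₂ = txx ∧ y₂ = tyy ∧ z₂ = tzz := by
  set D := (x - y) * (y - z) + (α - β)
  set E := (x - y) * (y - z) - (β - γ)
  have hx₁z : x₁ - z = D / (x - y) := hx₁ ▸ uYB_sub α β x y z h1
  have hxtz : x - tz = E / (y - z) := htz ▸ sub_vYB β γ y z x h4
  have hD : D ≠ 0 := fun h ↦ h2 (by rw [dYB, hx₁z, h, zero_div])
  have hE : E ≠ 0 := fun h ↦ h5 (by rw [dYB, hxtz, h, zero_div])
  simp only [uYB, vYB, dYB] at *
  have hy₁z₁ : y₁ - z₁ = (x - y) * E / D := by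
    rw [hy₁, hz₁, hx₁z, hx₁]
    field_simp
    ring
  have htxty : tx - ty = (y - z) * D / E := by
    rw [htx, hty, hxtz, htz]
    field_simp
    ring
  obtain ⟨hmid, hside⟩ :=
    shift_relations_of_identity (α := α) (β := β) (γ := γ) h1 h4 hD hE (by ring)
  rw [← hx₁z, ← htxty] at hmid
  rw [← hy₁z₁, ← hxtz] at hside
  refine ⟨?_, ?_, ?_⟩
  · linear_combination hx₂ - htxx - hty + hmid
  · linear_combination hy₂ + hz₁ + hx₁ - htyy - htx - htz + hmid + hside
  · linear_combination hz₂ + hy₁ - htzz + hside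

/-- the F_V map `R_(α,β)(x,y) = (y+(α−β)/(x−y), x+(α−β)/(x−y))` satisfies the parametric Yang–Baxter equation
`R²³ ∘ R¹³ ∘ R¹² = R¹² ∘ R¹³ ∘ R²³` on `ℂ³`, wherever all denominators are nonzero. -/
theorem FV_YangBaxter (α β γ x y z : ℂ)
    (x₁ y₁ x₂ z₁ y₂ z₂ ty tz tx tzz txx tyy : ℂ)
    -- left-hand side  R²³_(β,γ) ∘ R¹³_(α,γ) ∘ R¹²_(α,β) (x,y,z):
    (hx₁ : x₁ = uYB α β x y) (hy₁ : y₁ = vYB α β x y)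
    (hx₂ : x₂ = uYB α γ x₁ z) (hz₁ : z₁ = vYB α γ x₁ z)
    (hy₂ : y₂ = uYB β γ y₁ z₁) (hz₂ : z₂ = vYB β γ y₁ z₁)
    -- right-hand side  R¹²_(α,β) ∘ R¹³_(α,γ) ∘ R²³_(β,γ) (x,y,z):
    (hty : ty = uYB β γ y z) (htz : tz = vYB β γ y z)
    (htx : tx = uYB α γ x tz) (htzz : tzz = vYB α γ x tz)
    (htxx : txx = uYB α β tx ty) (htyy : tyy = vYB α β tx ty)
    -- all denominators nonzero:
    (h1 : dYB α β x y ≠ 0) (h2 : dYB α γ x₁ z ≠ 0) (h3 : dYB β γ y₁ z₁ ≠ 0)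
    (h4 : dYB β γ y z ≠ 0) (h5 : dYB α γ x tz ≠ 0) (h6 : dYB α β tx ty ≠ 0) :
    x₂ = txx ∧ y₂ = tyy ∧ z₂ = tzz :=
  FV_YangBaxter_general α β γ x y z x₁ y₁ x₂ z₁ y₂ z₂ ty tz tx tzz txx tyy hx₁ hy₁ hx₂ hz₁ hy₂ hz₂
    hty htz htx htzz htxx htyy h1 h2 h4 h5

end
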